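/- For every sequence a = (a_1,...,a_l) of positive integers and all standard basis vectors v^a_η, v^a_γ of V(a), one has (F v^a_η, v^a_γ)_a = (q^{a_1+...+a_l-1}/[β^η_1+...+β^η_l]_0)·(v^a_η, E v^a_γ)_a. -/

import Mathlib

open scoped Classical

set_option maxHeartbeats 1000000
set_option synthInstance.maxHeartbeats 200000

noncomputable section

abbrev K : Type := RatFunc ℂ

noncomputable def q : K := RatFunc.X

/-- The quantum integer `[k] = (q^k - q^{-k})/(q - q^{-1})`. -/
noncomputable def qnum (k : ℕ) : K := (q ^ k - q⁻¹ ^ k) / (q - q⁻¹)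

/-- The quantum factorial `[k]! = [k][k-1]⋯[1]`. -/
noncomputable def qfact : ℕ → K
  | 0 => 1
  | k + 1 => qnum (k + 1) * qfact k

/-- The underlying vector space of `V(a_1) ⊗ ⋯ ⊗ V(a_l)`, with standard basis indexed by
sequences `η ∈ {0,1}^l`. -/
abbrev V (n : ℕ) : Type := (Fin n → Fin 2) → K

/-- The standard basis vector `v^a_η`. -/
noncomputable def eb {n : ℕ} (η : Fin n → Fin 2) : V n := fun γ => if γ = η then 1 else 0

/-- The number of `1`s in `γ` strictly before position `i` (the Koszul sign exponent). -/
def onesBefore {n : ℕ} (γ : Fin n → Fin 2) (i : Fin n) : ℕ :=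
  (Finset.univ.filter (fun k => k < i ∧ γ k = 1)).card

/-- The action of `E` on `V(a_1) ⊗ ⋯ ⊗ V(a_l)` (via the iterated comultiplication
`Δ(E) = E ⊗ K⁻¹ + 1 ⊗ E`, with the Koszul sign rule). -/
noncomputable def Eop (a : ℕ → ℕ) (n : ℕ) : Module.End K (V n) where
  toFun f := fun γ => ∑ i : Fin n,
    if γ i = 0 then
      ((-1 : K) ^ onesBefore γ i) * qnum (a i)
        * q ^ (-((∑ j ∈ Finset.univ.filter (fun j => i < j), a j : ℕ) : ℤ))
        * f (Function.update γ i 1)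
    else 0
  map_add' f g := by
    funext γ
    simp only [Pi.add_apply, ← Finset.sum_add_distrib]
    refine Finset.sum_congr rfl fun i _ => ?_
    split_ifs <;> ring
  map_smul' c f := by
    funext γ
    simp only [Pi.smul_apply, smul_eq_mul, RingHom.id_apply, Finset.mul_sum]
    refine Finset.sum_congr rfl fun i _ => ?_
    split_ifs <;> ring

/-- The action of `F` on `V(a_1) ⊗ ⋯ ⊗ V(a_l)` (via the iterated comultiplication
`Δ(F) = F ⊗ 1 + K ⊗ F`, with the Koszul sign rule). -/
noncomputable def Fop (a : ℕ → ℕ) (n : ℕ) : Module.End K (V n) where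
  toFun f := fun γ => ∑ i : Fin n,
    if γ i = 1 then
      ((-1 : K) ^ onesBefore γ i)
        * q ^ (∑ j ∈ Finset.univ.filter (fun j => j < i), a j)
        * f (Function.update γ i 0)
    else 0
  map_add' f g := by
    funext γ
    simp only [Pi.add_apply, ← Finset.sum_add_distrib]
    refine Finset.sum_congr rfl fun i _ => ?_
    split_ifs <;> ring
  map_smul' c f := by
    funext γ
    simp only [Pi.smul_apply, smul_eq_mul, RingHom.id_apply, Finset.mul_sum]
    refine Finset.sum_congr rfl fun i _ => ?_
    split_ifs <;> ring

/-- The number of entries of `η` equal to `1` (the super degree of `v_η`). -/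
def ones {m : ℕ} (η : Fin m → Fin 2) : ℕ := (Finset.univ.filter (fun i => η i = 1)).card

/-- The number of entries of `η` equal to `0`. -/
def zeros {m : ℕ} (η : Fin m → Fin 2) : ℕ := (Finset.univ.filter (fun i => η i = 0)).card

/-- The parity twist `x ↦ (-1)^{|x|}·x` (on homogeneous components). -/
noncomputable def twist {m : ℕ} (x : V m) : V m := fun η => (-1 : K) ^ ones η * x η

/-- The bar involution of `V(a_1) ⊗ ⋯ ⊗ V(a_m)`, defined inductively from
`bar v^a_i = v^a_i` on each factor by `bar (w ⊗ w') = Θ'(bar w ⊗ bar w')` with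
`Θ' = 1 + (q⁻¹ - q) E ⊗ F` (with the Koszul sign rule) and `bar q = q⁻¹`. -/
noncomputable def barV (a : ℕ → ℕ) : (m : ℕ) → V m → V m
  | 0, f => f
  | m + 1, f => fun γ =>
    if γ (Fin.last m) = 0 then
      barV a m (fun δ => f (Fin.snoc δ 0)) (fun i => γ i.castSucc)
    else
      barV a m (fun δ => f (Fin.snoc δ 1)) (fun i => γ i.castSucc)
        + (q⁻¹ - q) *
          Eop a m (twist (barV a m (fun δ => f (Fin.snoc δ 0)))) (fun i => γ i.castSucc)

def s (n : ℕ) (i : Fin (n - 1)) : Equiv.Perm (Fin n) :=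
  Equiv.swap ⟨(i : ℕ), by have := i.isLt; omega⟩ ⟨(i : ℕ) + 1, by have := i.isLt; omega⟩

def wordProd (n : ℕ) (l : List (Fin (n - 1))) : Equiv.Perm (Fin n) :=
  (l.map (s n)).prod

def len (n : ℕ) (w : Equiv.Perm (Fin n)) : ℕ :=
  sInf {k | ∃ l : List (Fin (n - 1)), l.length = k ∧ wordProd n l = w}

def bruhatLE (n : ℕ) (u w : Equiv.Perm (Fin n)) : Prop :=
  ∃ l : List (Fin (n - 1)), l.length = len n w ∧ wordProd n l = w ∧
    ∃ t : List (Fin (n - 1)), t.Sublist l ∧ wordProd n t = u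

def bruhatLT (n : ℕ) (u w : Equiv.Perm (Fin n)) : Prop :=
  bruhatLE n u w ∧ u ≠ w

/-- The parabolic subgroup of `S_n` generated by the simple transpositions indexed by `P`. -/
def parab (n : ℕ) (P : Finset (Fin (n - 1))) : Subgroup (Equiv.Perm (Fin n)) :=
  Subgroup.closure {σ | ∃ i ∈ P, σ = s n i}

/-- `w` is a shortest coset representative for `(S_k × S_{l-k}) \ S_l` (the parabolic
subgroup generated by all simple reflections except `s_k`). -/
def shortRep (l k : ℕ) (w : Equiv.Perm (Fin l)) : Prop :=
  ∀ x ∈ parab l (Finset.univ.filter (fun i : Fin (l - 1) => (i : ℕ) + 1 ≠ k)),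
    len l w ≤ len l (x * w)

/-- The minimal `{0,1}`-sequence `η_min = (0,…,0,1,…,1)` with `k` zeros. -/
def etaMin (l k : ℕ) : Fin l → Fin 2 := fun i => if (i : ℕ) < k then 0 else 1

/-- The partial order on the standard basis vectors of a weight space: within the weight
with `k` zeros, `η < γ` iff `η = η_min·u`, `γ = η_min·w` for shortest coset
representatives `u ≺ w` in the Bruhat order. -/
def seqLT (l k : ℕ) (η γ : Fin l → Fin 2) : Prop :=
  ∃ u w : Equiv.Perm (Fin l), shortRep l k u ∧ shortRep l k w ∧ bruhatLT l u w ∧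
    η = (fun i => etaMin l k (u i)) ∧ γ = (fun i => etaMin l k (w i))

/-- The bar involution of `V(a)`: the semilinear extension (with respect to the field
homomorphism `barK`, which implements `q ↦ q⁻¹`) of the map `barV` computing the bar
involution on the standard basis vectors. -/
noncomputable def barSemi (barK : K →+* K) (a : ℕ → ℕ) (l : ℕ) (f : V l) : V l :=
  barV a l (fun η => barK (f η))

/-- `v` is the canonical basis element `v^{◊a}_η` of `V(a)`: it is bar-invariant and
`v - v^a_η` is a `q·ℤ[q]`-linear combination of standard basis vectors strictly smaller
than `v^a_η`. -/
def IsCanon (barK : K →+* K) (a : ℕ → ℕ) (l : ℕ) (η : Fin l → Fin 2) (v : V l) : Prop :=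
  barSemi barK a l v = v ∧
  ∃ R : (Fin l → Fin 2) → Polynomial ℤ,
    (∀ γ, ¬ seqLT l (zeros η) γ η → R γ = 0) ∧
    v = eb η + ∑ γ : Fin l → Fin 2, (q * Polynomial.aeval q (R γ)) • eb γ

/-- `β^η_j = a_j - η_j`. -/
def betaE (a : ℕ → ℕ) {m : ℕ} (η : Fin m → Fin 2) (i : Fin m) : ℕ := a i - (η i : ℕ)

/-- The diagonal coefficient
`q^{Σ_{i≠j} β^η_i β^η_j}·[β^η_1+⋯+β^η_m]!/([β^η_1]!⋯[β^η_m]!)` of the bilinear form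
(the sum in the exponent is over the unordered pairs `i ≠ j`). -/
noncomputable def formCoeff (a : ℕ → ℕ) (m : ℕ) (η : Fin m → Fin 2) : K :=
  q ^ (∑ p ∈ (Finset.univ ×ˢ Finset.univ).filter (fun p : Fin m × Fin m => p.1 < p.2),
        betaE a η p.1 * betaE a η p.2)
    * qfact (∑ i, betaE a η i) / ∏ i, qfact (betaE a η i)

/-- The symmetric bilinear form `(·,·)_a` on `V(a)`, for which the standard basis is
orthogonal with `(v^a_η, v^a_η)_a = formCoeff a m η`. -/
noncomputable def Bform (a : ℕ → ℕ) (m : ℕ) (f g : V m) : K :=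
  ∑ η : Fin m → Fin 2, formCoeff a m η * f η * g η

/-- The rescaled quantum integer `[k]₀ = q^{k-1}·[k]`. -/
noncomputable def qnum0 (k : ℕ) : K := q ^ ((k : ℤ) - 1) * qnum k

/-!
Both `(F v_η)_γ` and `(E v_γ)_η` vanish unless `γ` arises from `η` by turning a single `0`, at some
position `i`, into a `1`, and then they carry the same Koszul sign. So the identity can be checked
one position `i` at a time. There it reduces to the recursion
`[a_i]·(v_η, v_η) = q^N·[a_i + N]·(v_γ, v_γ)`, `N = Σ_{j≠i} β^η_j`, of the diagonal coefficients of
the form, and the powers of `q` cancel because `a_1 + ⋯ + a_l = Σ_{j<i} a_j + a_i + Σ_{j>i} a_j`.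
-/

open Finset Function

lemma q_ne_zero : q ≠ 0 := RatFunc.X_ne_zero

lemma q_pow_ne_one {n : ℕ} (hn : n ≠ 0) : q ^ n ≠ 1 := by
  intro h
  have h' : algebraMap (Polynomial ℂ) K (Polynomial.X ^ n) = algebraMap (Polynomial ℂ) K 1 := by
    simpa [q, RatFunc.algebraMap_X] using h
  simpa [hn] using congrArg Polynomial.natDegree (RatFunc.algebraMap_injective ℂ h')

lemma q_pow_sub_inv_pow_ne_zero {k : ℕ} (hk : k ≠ 0) : q ^ k - q⁻¹ ^ k ≠ 0 := by
  intro h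
  refine q_pow_ne_one (n := 2 * k) (by omega) ?_
  rw [two_mul, pow_add]
  nth_rw 2 [sub_eq_zero.mp h]
  rw [← mul_pow, mul_inv_cancel₀ q_ne_zero, one_pow]

lemma qnum_ne_zero {k : ℕ} (hk : k ≠ 0) : qnum k ≠ 0 :=
  div_ne_zero (q_pow_sub_inv_pow_ne_zero hk) (by simpa using q_pow_sub_inv_pow_ne_zero one_ne_zero)

lemma qfact_succ (k : ℕ) : qfact (k + 1) = qnum (k + 1) * qfact k := rfl

lemma qfact_ne_zero (k : ℕ) : qfact k ≠ 0 := by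
  induction k with
  | zero => exact one_ne_zero
  | succ k ih => exact mul_ne_zero (qnum_ne_zero k.succ_ne_zero) ih

lemma sq_sum_eq_sum_sq_add_two_mul_sum_lt {ι R : Type*} [LinearOrder ι] [CommSemiring R]
    (t : Finset ι) (f : ι → R) :
    (∑ i ∈ t, f i) ^ 2
      = ∑ i ∈ t, f i ^ 2 + 2 * ∑ p ∈ (t ×ˢ t).filter (fun p => p.1 < p.2), f p.1 * f p.2 := by
  have hswap : ∑ p ∈ (t ×ˢ t).filter (fun p => p.2 < p.1), f p.1 * f p.2
      = ∑ p ∈ (t ×ˢ t).filter (fun p => p.1 < p.2), f p.1 * f p.2 :=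
    sum_nbij' Prod.swap Prod.swap (by simp +contextual) (by simp +contextual) (by simp) (by simp)
      (fun p _ => mul_comm _ _)
  have hdiag : ∑ p ∈ (t ×ˢ t).filter (fun p => p.1 = p.2), f p.1 * f p.2 = ∑ i ∈ t, f i ^ 2 := by
    simp [sum_filter, sum_product, sq]
  calc (∑ i ∈ t, f i) ^ 2
      = ∑ p ∈ t ×ˢ t, ((if p.1 < p.2 then f p.1 * f p.2 else 0)
          + (if p.2 < p.1 then f p.1 * f p.2 else 0) + (if p.1 = p.2 then f p.1 * f p.2 else 0)) := by
        rw [sq, sum_mul_sum, ← sum_product']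
        refine sum_congr rfl fun p _ => ?_
        rcases lt_trichotomy p.1 p.2 with h | h | h
        · simp [h, h.not_gt, h.ne]
        · simp [h]
        · simp [h, h.not_gt, h.ne']
    _ = _ := by
        simp only [sum_add_distrib, ← sum_filter, hswap, hdiag]
        ring

lemma sum_pairs_mul_eq_add_sum_erase {ι : Type*} [LinearOrder ι] {t : Finset ι} {i : ι}
    (hi : i ∈ t) {f g : ι → ℕ} (hgi : g i = f i + 1) (hg : ∀ j ≠ i, g j = f j) :
    ∑ p ∈ (t ×ˢ t).filter (fun p => p.1 < p.2), g p.1 * g p.2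
      = ∑ p ∈ (t ×ˢ t).filter (fun p => p.1 < p.2), f p.1 * f p.2 + ∑ j ∈ t.erase i, f j := by
  have hg_erase : ∑ j ∈ t.erase i, g j = ∑ j ∈ t.erase i, f j :=
    sum_congr rfl fun j hj => hg j (ne_of_mem_erase hj)
  have hg_erase_sq : ∑ j ∈ t.erase i, g j ^ 2 = ∑ j ∈ t.erase i, f j ^ 2 :=
    sum_congr rfl fun j hj => by rw [hg j (ne_of_mem_erase hj)]
  have hg_sq := sq_sum_eq_sum_sq_add_two_mul_sum_lt t g
  have hf_sq := sq_sum_eq_sum_sq_add_two_mul_sum_lt t f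
  rw [← add_sum_erase t _ hi, ← add_sum_erase t (g · ^ 2) hi, hg_erase, hg_erase_sq, hgi] at hg_sq
  rw [← add_sum_erase t _ hi, ← add_sum_erase t (f · ^ 2) hi] at hf_sq
  linarith

lemma sum_eq_sum_lt_add_add_sum_gt {ι M : Type*} [Fintype ι] [LinearOrder ι] [AddCommMonoid M]
    (f : ι → M) (i : ι) :
    ∑ j, f j = ∑ j ∈ univ.filter (· < i), f j + f i + ∑ j ∈ univ.filter (i < ·), f j := by
  have hge : univ.filter (fun j => ¬ j < i) = insert i (univ.filter (i < ·)) := by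
    ext j
    simp [le_iff_lt_or_eq, eq_comm, or_comm]
  rw [← sum_filter_add_sum_filter_not univ (· < i), hge, sum_insert (by simp), add_assoc]

def formWeight {m : ℕ} (β : Fin m → ℕ) : K :=
  q ^ (∑ p ∈ (univ ×ˢ univ).filter (fun p : Fin m × Fin m => p.1 < p.2), β p.1 * β p.2)
    * qfact (∑ i, β i) / ∏ i, qfact (β i)

lemma formCoeff_eq_formWeight (a : ℕ → ℕ) (m : ℕ) (η : Fin m → Fin 2) :
    formCoeff a m η = formWeight (betaE a η) := rfl

lemma qnum_mul_formWeight_of_succ {m : ℕ} {β β' : Fin m → ℕ} {i : Fin m}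
    (hi : β' i = β i + 1) (hne : ∀ j ≠ i, β' j = β j) :
    qnum (β' i) * formWeight β'
      = q ^ (∑ j ∈ univ.erase i, β j) * qnum (∑ j, β' j) * formWeight β := by
  have hsum_erase : ∑ j ∈ univ.erase i, β' j = ∑ j ∈ univ.erase i, β j :=
    sum_congr rfl fun j hj => hne j (ne_of_mem_erase hj)
  have hprod_erase : ∏ j ∈ univ.erase i, qfact (β' j) = ∏ j ∈ univ.erase i, qfact (β j) :=
    prod_congr rfl fun j hj => by rw [hne j (ne_of_mem_erase hj)]
  have hsum : ∑ j, β' j = ∑ j, β j + 1 := by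
    rw [← add_sum_erase _ _ (mem_univ i), ← add_sum_erase _ β (mem_univ i), hi, hsum_erase]
    ring
  have hprod : ∏ j, qfact (β' j) = qnum (β i + 1) * ∏ j, qfact (β j) := by
    rw [← mul_prod_erase _ _ (mem_univ i), ← mul_prod_erase _ (fun j => qfact (β j)) (mem_univ i),
      hi, hprod_erase, qfact_succ, mul_assoc]
  have hQ : ∏ j, qfact (β j) ≠ 0 := prod_ne_zero_iff.mpr fun j _ => qfact_ne_zero _
  have hqi : qnum (β i + 1) ≠ 0 := qnum_ne_zero (Nat.succ_ne_zero _)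
  rw [formWeight, formWeight, sum_pairs_mul_eq_add_sum_erase (mem_univ i) hi hne, hsum, hprod, hi,
    pow_add, qfact_succ]
  field_simp

lemma qnum_mul_formCoeff_of_eq_zero (a : ℕ → ℕ) {m : ℕ} {η : Fin m → Fin 2} {i : Fin m}
    (hη : η i = 0) (ha : 0 < a i) :
    qnum (a i) * formCoeff a m η
      = q ^ (∑ j ∈ univ.erase i, betaE a η j) * qnum (∑ j, betaE a η j)
          * formCoeff a m (update η i 1) := by
  have hne : ∀ j ≠ i, betaE a η j = betaE a (update η i 1) j := fun j hj => by
    simp [betaE, update_of_ne hj]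
  have hi : betaE a η i = betaE a (update η i 1) i + 1 := by
    simp [betaE, hη]
    omega
  have hai : betaE a η i = a i := by simp [betaE, hη]
  rw [formCoeff_eq_formWeight, formCoeff_eq_formWeight, ← hai, qnum_mul_formWeight_of_succ hi hne,
    sum_congr rfl fun j hj => hne j (ne_of_mem_erase hj)]

lemma Bform_eb_left (a : ℕ → ℕ) (m : ℕ) (η : Fin m → Fin 2) (g : V m) :
    Bform a m (eb η) g = formCoeff a m η * g η := by
  simp [Bform, eb]

lemma Bform_eb_right (a : ℕ → ℕ) (m : ℕ) (f : V m) (γ : Fin m → Fin 2) :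
    Bform a m f (eb γ) = formCoeff a m γ * f γ := by
  simp [Bform, eb]

lemma onesBefore_update {n : ℕ} (η : Fin n → Fin 2) (i : Fin n) (v : Fin 2) :
    onesBefore (update η i v) i = onesBefore η i := by
  unfold onesBefore
  congr 1
  exact filter_congr fun k _ => by
    by_cases hk : k < i
    · rw [update_of_ne hk.ne]
    · simp [hk]

lemma Fop_eb_apply (a : ℕ → ℕ) {n : ℕ} (η γ : Fin n → Fin 2) :
    Fop a n (eb η) γ = ∑ i, if η i = 0 ∧ γ = update η i 1 then
      (-1 : K) ^ onesBefore η i * q ^ (∑ j ∈ univ.filter (fun j => j < i), a j) else 0 := by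
  simp only [Fop, LinearMap.coe_mk, AddHom.coe_mk]
  refine sum_congr rfl fun i _ => ?_
  have hiff : (γ i = 1 ∧ update γ i 0 = η) ↔ (η i = 0 ∧ γ = update η i 1) := by
    simp only [update_eq_iff, eq_update_iff]
    grind
  simp only [eb, mul_ite, mul_one, mul_zero, ← ite_and]
  split_ifs with h₁ h₂ h₂
  · obtain ⟨-, rfl⟩ := h₂
    rw [onesBefore_update]
  · exact absurd (hiff.mp h₁) h₂
  · exact absurd (hiff.mpr h₂) h₁
  · rfl

lemma Eop_eb_apply (a : ℕ → ℕ) {n : ℕ} (η γ : Fin n → Fin 2) :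
    Eop a n (eb γ) η = ∑ i, if η i = 0 ∧ γ = update η i 1 then
      (-1 : K) ^ onesBefore η i * qnum (a i)
        * q ^ (-((∑ j ∈ univ.filter (fun j => i < j), a j : ℕ) : ℤ)) else 0 := by
  simp only [Eop, LinearMap.coe_mk, AddHom.coe_mk]
  refine sum_congr rfl fun i _ => ?_
  simp only [eb, mul_ite, mul_one, mul_zero, ← ite_and, eq_comm]

theorem statement15 (l : ℕ) (a : ℕ → ℕ) (ha : ∀ i, 0 < a i)
    (η γ : Fin l → Fin 2) :
    Bform a l (Fop a l (eb η)) (eb γ)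
      = (q ^ ((∑ i : Fin l, (a i : ℤ)) - 1) / qnum0 (∑ i, betaE a η i))
          * Bform a l (eb η) (Eop a l (eb γ)) := by
  rw [Bform_eb_right, Bform_eb_left, Fop_eb_apply, Eop_eb_apply, mul_sum, mul_sum, mul_sum]
  refine sum_congr rfl fun i _ => ?_
  split_ifs with h
  · obtain ⟨hi, rfl⟩ := h
    have hcoef := qnum_mul_formCoeff_of_eq_zero a hi (ha i)
    set N := ∑ j ∈ univ.erase i, betaE a η j
    have hsum : ∑ j, betaE a η j = a i + N := by
      rw [← add_sum_erase _ _ (mem_univ i), show betaE a η i = a i by simp [betaE, hi]]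
    rw [hsum] at hcoef ⊢
    have hN : qnum (a i + N) ≠ 0 := qnum_ne_zero (by have := ha i; omega)
    have hq := q_ne_zero
    rw [qnum0, sum_eq_sum_lt_add_add_sum_gt (fun j : Fin l => (a j : ℤ)) i]
    push_cast
    simp only [zpow_add₀ hq, zpow_sub₀ hq, zpow_neg, zpow_natCast, zpow_one, ← Nat.cast_sum]
    field_simp
    linear_combination -hcoef
  · simp
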